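/- arXiv:0904.0492 — 3 statements merged into one kernel-verified Lean document; each statement's English description precedes it below -/
import Mathlib

section
/- Let n ≥ 1, let 1 ≤ k ≤ n be an integer, and let λ = (λ_1, …, λ_n) ∈ ℝ^n have all entries positive. Then ∑_{i=1}^n λ_i² ( S_{k-1,i}^n(λ)² − S_{k,i}^n(λ) · S_{k-2,i}^n(λ) ) ≥ (k/(n−k+1)) · S_k^n(λ)². Equivalently, since the i-th partial derivative of Q_k = S_k^n/S_{k-1}^n at λ equals (S_{k-1,i}^n(λ)² − S_{k,i}^n(λ) S_{k-2,i}^n(λ))/S_{k-1}^n(λ)², this states ∑_{i=1}^n (∂Q_k/∂λ_i)(λ) · λ_i² ≥ (k/(n−k+1)) · Q_k(λ)². -/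
/-!
Deleting `λ_i` gives `S_j = S_{j,i} + λ_i S_{j-1,i}`, which turns the `i`-th summand into
`S_k (S_k - S_{k,i}) - S_{k-1} (S_{k+1} - S_{k+1,i})`; as `∑_i S_{j,i} = (n - j) S_j`, the sum is
`k S_k² - (k + 1) S_{k-1} S_{k+1}`. The claim is then Newton's inequality
`(k + 1) (n - k + 1) S_{k-1} S_{k+1} ≤ k (n - k) S_k²`.

For positive entries, Newton's inequality `E_{j+2} E_j ≤ E_{j+1}²` for the means
`E_j = S_j / C(m, j)` follows by induction on the number `m` of entries: adjoining `a` gives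
`(m + 1) E'_{j+1} = (m - j) E_{j+1} + (j + 1) a E_j`, and the inequality for `E'` becomes a
polynomial inequality whose slack is a sum of nonnegative terms, given the log-concavity of `E`
and its consequence `E_{j+3} E_j ≤ E_{j+2} E_{j+1}`.
-/

/-- The elementary symmetric polynomial `S_k^m(λ)`, with the convention that
it vanishes for `k < 0` or `k > m` (the latter automatic) and `S_0^m = 1`. -/
noncomputable def esymmS (m : ℕ) (k : ℤ) (lam : Fin m → ℝ) : ℝ :=
  if k < 0 then 0 else
    ∑ t ∈ Finset.univ.powersetCard k.toNat, ∏ i ∈ t, lam i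

/-- `S_{k,i}^m(λ) = S_k^{m-1}(λ̂_i)`: the elementary symmetric polynomial of
`λ` with its `i`-th entry deleted. -/
noncomputable def esymmSDel (m : ℕ) (k : ℤ) (lam : Fin m → ℝ) (i : Fin m) : ℝ :=
  if k < 0 then 0 else
    ∑ t ∈ (Finset.univ.erase i).powersetCard k.toNat, ∏ j ∈ t, lam j

theorem newton_step {p q b x y z w : ℝ} (hp : 0 ≤ p) (hq : 0 ≤ q) (hb : 0 ≤ b)
    (hzy : z * y ≤ x ^ 2) (hxw : x * w ≤ y ^ 2) (hzw : z * w ≤ x * y) :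
    (p * z + (q + 2) * b * x) * ((p + 2) * y + q * b * w) ≤
      ((p + 1) * x + (q + 1) * b * y) ^ 2 := by
  have slack : ((p + 1) * x + (q + 1) * b * y) ^ 2 -
      (p * z + (q + 2) * b * x) * ((p + 2) * y + q * b * w) =
      (x - b * y) ^ 2 + p * (p + 2) * (x ^ 2 - z * y) + q * (q + 2) * b ^ 2 * (y ^ 2 - x * w) +
        p * q * b * (x * y - z * w) := by ring
  rw [← sub_nonneg, slack]
  have := sub_nonneg.2 hzy
  have := sub_nonneg.2 hxw
  have := sub_nonneg.2 hzw
  positivity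

namespace Multiset

section Semiring

variable {R : Type*} [CommSemiring R]

@[simp]
theorem esymm_zero (s : Multiset R) : s.esymm 0 = 1 := by
  simp [esymm]

theorem esymm_of_card_lt {s : Multiset R} {j : ℕ} (h : card s < j) : s.esymm j = 0 := by
  simp [esymm, powersetCard_eq_empty j h]

theorem esymm_cons_succ (a : R) (s : Multiset R) (j : ℕ) :
    (a ::ₘ s).esymm (j + 1) = s.esymm (j + 1) + a * s.esymm j := by
  simp [esymm, powersetCard_cons, sum_map_mul_left]

variable [LinearOrder R] [IsStrictOrderedRing R] {s : Multiset R}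

theorem esymm_nonneg (hs : ∀ x ∈ s, 0 ≤ x) (j : ℕ) : 0 ≤ s.esymm j := by
  refine sum_nonneg fun x hx => ?_
  obtain ⟨t, ht, rfl⟩ := mem_map.1 hx
  exact prod_nonneg fun y hy => hs y (mem_of_le (mem_powersetCard.1 ht).1 hy)

theorem esymm_pos (hs : ∀ x ∈ s, 0 < x) {j : ℕ} (hj : j ≤ card s) : 0 < s.esymm j := by
  induction s using Multiset.induction_on generalizing j with
  | empty => simp_all
  | cons a s ih =>
    have ha : 0 < a := hs a (mem_cons_self a s)
    have hs' : ∀ x ∈ s, 0 < x := fun x hx => hs x (mem_cons_of_mem hx)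
    cases j with
    | zero => simp
    | succ j =>
      rw [card_cons, Nat.succ_le_succ_iff] at hj
      rw [esymm_cons_succ]
      have := esymm_nonneg (fun x hx => (hs' x hx).le) (j + 1)
      have := ih hs' hj
      positivity

end Semiring

noncomputable def esymmMean (s : Multiset ℝ) (j : ℕ) : ℝ :=
  s.esymm j / (card s).choose j

variable {s : Multiset ℝ}

@[simp]
theorem esymmMean_zero (s : Multiset ℝ) : s.esymmMean 0 = 1 := by
  simp [esymmMean]

theorem esymmMean_of_card_lt {j : ℕ} (h : card s < j) : s.esymmMean j = 0 := by
  simp [esymmMean, esymm_of_card_lt h]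

theorem esymmMean_nonneg (hs : ∀ x ∈ s, 0 ≤ x) (j : ℕ) : 0 ≤ s.esymmMean j :=
  div_nonneg (esymm_nonneg hs j) (Nat.cast_nonneg _)

theorem esymmMean_pos (hs : ∀ x ∈ s, 0 < x) {j : ℕ} (hj : j ≤ card s) : 0 < s.esymmMean j :=
  div_pos (esymm_pos hs hj) (mod_cast Nat.choose_pos hj)

theorem esymm_eq_choose_mul_esymmMean (s : Multiset ℝ) (j : ℕ) :
    s.esymm j = (card s).choose j * s.esymmMean j := by
  rcases le_or_gt j (card s) with hj | hj
  · rw [esymmMean, mul_div_cancel₀ _ (mod_cast (Nat.choose_pos hj).ne')]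
  · simp [esymm_of_card_lt hj, esymmMean_of_card_lt hj]

theorem card_add_one_mul_esymmMean_cons_succ (a : ℝ) {j : ℕ} (hj : j ≤ card s) :
    (card s + 1) * (a ::ₘ s).esymmMean (j + 1) =
      (card s - j) * s.esymmMean (j + 1) + (j + 1) * a * s.esymmMean j := by
  set m := card s
  have hC : ((m + 1).choose (j + 1) : ℝ) ≠ 0 := mod_cast (Nat.choose_pos (by omega)).ne'
  have hA : (m.choose (j + 1) : ℝ) * (m + 1) = (m + 1).choose (j + 1) * (m - j) := by
    have := Nat.choose_mul_succ_eq m (j + 1)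
    rw [Nat.add_sub_add_right, ← Nat.cast_inj (R := ℝ)] at this
    push_cast [Nat.cast_sub hj] at this
    exact this
  have hB : ((m : ℝ) + 1) * m.choose j = (m + 1).choose (j + 1) * (j + 1) :=
    mod_cast Nat.add_one_mul_choose_eq m j
  have hrec := esymm_cons_succ a s j
  simp only [esymm_eq_choose_mul_esymmMean, card_cons] at hrec
  apply mul_left_cancel₀ hC
  linear_combination (m + 1 : ℝ) * hrec + s.esymmMean (j + 1) * hA + a * s.esymmMean j * hB

theorem esymmMean_mul_le_mul_of_sq_le (hs : ∀ x ∈ s, 0 < x)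
    (hlc : ∀ j, s.esymmMean (j + 2) * s.esymmMean j ≤ s.esymmMean (j + 1) ^ 2) (j : ℕ) :
    s.esymmMean (j + 3) * s.esymmMean j ≤ s.esymmMean (j + 2) * s.esymmMean (j + 1) := by
  have hs₀ : ∀ x ∈ s, 0 ≤ x := fun x hx => (hs x hx).le
  rcases le_or_gt (j + 3) (card s) with hj | hj
  · have h₁ := esymmMean_pos hs (j := j + 1) (by omega)
    have h₂ := esymmMean_pos hs (j := j + 2) (by omega)
    have hprod := mul_le_mul (hlc (j + 1)) (hlc j)
      (mul_nonneg (esymmMean_nonneg hs₀ _) (esymmMean_nonneg hs₀ _)) (sq_nonneg _)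
    refine le_of_mul_le_mul_right ?_ (mul_pos h₁ h₂)
    linear_combination hprod
  · rw [esymmMean_of_card_lt hj, zero_mul]
    exact mul_nonneg (esymmMean_nonneg hs₀ _) (esymmMean_nonneg hs₀ _)

theorem esymmMean_cons_add_two_mul_le_sq {a : ℝ} (ha : 0 < a) (hs : ∀ x ∈ s, 0 < x)
    (hlc : ∀ j, s.esymmMean (j + 2) * s.esymmMean j ≤ s.esymmMean (j + 1) ^ 2) (j : ℕ) :
    (a ::ₘ s).esymmMean (j + 2) * (a ::ₘ s).esymmMean j ≤
      (a ::ₘ s).esymmMean (j + 1) ^ 2 := by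
  set m := card s
  rcases le_or_gt (j + 1) m with hj | hj
  swap
  · rw [esymmMean_of_card_lt (by rw [card_cons]; omega), zero_mul]
    positivity
  -- `w` plays the role of `s.esymmMean (j - 1)`, read as `0` when `j = 0`.
  obtain ⟨w, hrec₀, hxw, hzw⟩ : ∃ w, (m + 1) * (a ::ₘ s).esymmMean j =
      (m - j + 1) * s.esymmMean j + j * a * w ∧
      s.esymmMean (j + 1) * w ≤ s.esymmMean j ^ 2 ∧
      s.esymmMean (j + 2) * w ≤ s.esymmMean (j + 1) * s.esymmMean j := by
    cases j with
    | zero =>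
      refine ⟨0, by simp, by simp, ?_⟩
      simpa using esymmMean_nonneg (fun x hx => (hs x hx).le) 1
    | succ j =>
      refine ⟨s.esymmMean j, ?_, hlc j, esymmMean_mul_le_mul_of_sq_le hs hlc j⟩
      rw [card_add_one_mul_esymmMean_cons_succ a (by omega)]
      push_cast
      ring
  have hrec₁ := card_add_one_mul_esymmMean_cons_succ a (s := s) (j := j) (by omega)
  have hrec₂ := card_add_one_mul_esymmMean_cons_succ a (s := s) (j := j + 1) (by omega)
  have hp : (0 : ℝ) ≤ m - j - 1 := by
    have : ((j + 1 : ℕ) : ℝ) ≤ m := mod_cast hj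
    push_cast at this
    linarith
  have step := newton_step hp (Nat.cast_nonneg j) ha.le (hlc j) hxw hzw
  have hscaled : ((m + 1) * (a ::ₘ s).esymmMean (j + 2)) *
      ((m + 1) * (a ::ₘ s).esymmMean j) ≤ ((m + 1) * (a ::ₘ s).esymmMean (j + 1)) ^ 2 := by
    rw [hrec₂, hrec₁, hrec₀]
    push_cast
    linear_combination step
  refine le_of_mul_le_mul_left ?_ (by positivity : (0 : ℝ) < (m + 1) ^ 2)
  linear_combination hscaled

theorem esymmMean_add_two_mul_le_sq (hs : ∀ x ∈ s, 0 < x) (j : ℕ) :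
    s.esymmMean (j + 2) * s.esymmMean j ≤ s.esymmMean (j + 1) ^ 2 := by
  induction s using Multiset.induction_on generalizing j with
  | empty =>
    rw [esymmMean_of_card_lt (by simp), zero_mul]
    positivity
  | cons a s ih =>
    have hs' : ∀ x ∈ s, 0 < x := fun x hx => hs x (mem_cons_of_mem hx)
    exact esymmMean_cons_add_two_mul_le_sq (hs a (mem_cons_self a s)) hs' (ih hs') j

theorem esymm_add_two_mul_le_sq (hs : ∀ x ∈ s, 0 < x) (j : ℕ) :
    (j + 2) * (card s - j) * (s.esymm (j + 2) * s.esymm j) ≤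
      (j + 1) * (card s - j - 1) * s.esymm (j + 1) ^ 2 := by
  set m := card s
  rcases le_or_gt (j + 1) m with hj | hj
  swap
  · simp [esymm_of_card_lt hj, esymm_of_card_lt (Nat.lt_succ_of_lt hj)]
  have hA : (m.choose (j + 2) : ℝ) * (j + 2) = m.choose (j + 1) * (m - j - 1) := by
    have := Nat.choose_succ_right_eq m (j + 1)
    rw [← Nat.cast_inj (R := ℝ)] at this
    push_cast [Nat.cast_sub hj] at this
    linear_combination this
  have hB : (m.choose (j + 1) : ℝ) * (j + 1) = m.choose j * (m - j) := by
    have := Nat.choose_succ_right_eq m j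
    rw [← Nat.cast_inj (R := ℝ)] at this
    push_cast [Nat.cast_sub (Nat.le_of_succ_le hj)] at this
    linear_combination this
  have hcoef : (0 : ℝ) ≤ (j + 1) * (m - j - 1) * m.choose (j + 1) ^ 2 := by
    have : ((j + 1 : ℕ) : ℝ) ≤ m := mod_cast hj
    push_cast at this
    have : (0 : ℝ) ≤ m - j - 1 := by linarith
    positivity
  simp only [esymm_eq_choose_mul_esymmMean]
  calc (j + 2) * (m - j) * (m.choose (j + 2) * s.esymmMean (j + 2) * (m.choose j * s.esymmMean j))
      = (j + 1) * (m - j - 1) * m.choose (j + 1) ^ 2 * (s.esymmMean (j + 2) * s.esymmMean j) := by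
        linear_combination (m - j) * m.choose j * s.esymmMean (j + 2) * s.esymmMean j * hA -
          (m - j - 1) * m.choose (j + 1) * s.esymmMean (j + 2) * s.esymmMean j * hB
    _ ≤ (j + 1) * (m - j - 1) * m.choose (j + 1) ^ 2 * s.esymmMean (j + 1) ^ 2 :=
        mul_le_mul_of_nonneg_left (esymmMean_add_two_mul_le_sq hs j) hcoef
    _ = (j + 1) * (m - j - 1) * (m.choose (j + 1) * s.esymmMean (j + 1)) ^ 2 := by ring

end Multiset

open Finset

theorem Finset.sum_sum_powersetCard_erase {α M : Type*} [DecidableEq α] [AddCommMonoid M]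
    (s : Finset α) (j : ℕ) (g : Finset α → M) :
    ∑ i ∈ s, ∑ t ∈ (s.erase i).powersetCard j, g t =
      (#s - j) • ∑ t ∈ s.powersetCard j, g t := by
  rw [sum_comm' (t' := s.powersetCard j) (s' := fun t => s \ t), smul_sum]
  · refine sum_congr rfl fun t ht => ?_
    rw [mem_powersetCard] at ht
    rw [sum_const, card_sdiff_of_subset ht.1, ht.2]
  · intro i t
    simp only [mem_powersetCard, subset_erase, mem_sdiff]
    tauto

section Deletion

variable {n : ℕ} (lam : Fin n → ℝ)

theorem esymmS_natCast (j : ℕ) : esymmS n j lam = (univ.val.map lam).esymm j := by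
  rw [esymmS, if_neg (by omega), Int.toNat_natCast, esymm_map_val]

theorem esymmSDel_natCast (j : ℕ) (i : Fin n) :
    esymmSDel n j lam i = ((univ.erase i).val.map lam).esymm j := by
  rw [esymmSDel, if_neg (by omega), Int.toNat_natCast, esymm_map_val]

theorem esymmS_eq_esymmSDel_add (i : Fin n) (j : ℤ) :
    esymmS n j lam = esymmSDel n j lam i + lam i * esymmSDel n (j - 1) lam i := by
  rcases lt_or_ge j 0 with hj | hj
  · simp [esymmS, esymmSDel, hj, show j - 1 < 0 by omega]
  lift j to ℕ using hj
  cases j with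
  | zero => simp [esymmS, esymmSDel]
  | succ j =>
    have hcons : univ.val.map lam = lam i ::ₘ (univ.erase i).val.map lam := by
      rw [erase_val, ← Multiset.map_cons, Multiset.cons_erase (mem_univ_val i)]
    rw [Nat.cast_succ, add_sub_cancel_right, ← Nat.cast_succ, esymmS_natCast, esymmSDel_natCast,
      esymmSDel_natCast, hcons, Multiset.esymm_cons_succ]

theorem sum_esymmSDel (j : ℕ) :
    ∑ i, esymmSDel n j lam i = ((n : ℝ) - j) * esymmS n j lam := by
  rcases le_or_gt j n with hj | hj
  · simp only [esymmSDel, esymmS, if_neg (Int.natCast_nonneg j).not_gt, Int.toNat_natCast]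
    rw [sum_sum_powersetCard_erase, card_univ, Fintype.card_fin, nsmul_eq_mul, Nat.cast_sub hj]
  · rw [esymmS_natCast, Multiset.esymm_of_card_lt (by simpa), mul_zero]
    refine sum_eq_zero fun i _ => ?_
    rw [esymmSDel_natCast, Multiset.esymm_of_card_lt (by simp; omega)]

theorem sq_mul_esymmSDel_sq_sub_eq (i : Fin n) (k : ℤ) :
    lam i ^ 2 * (esymmSDel n (k - 1) lam i ^ 2 - esymmSDel n k lam i * esymmSDel n (k - 2) lam i) =
      esymmS n k lam * (esymmS n k lam - esymmSDel n k lam i) -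
        esymmS n (k - 1) lam * (esymmS n (k + 1) lam - esymmSDel n (k + 1) lam i) := by
  have hk := esymmS_eq_esymmSDel_add lam i k
  have hk_pred := esymmS_eq_esymmSDel_add lam i (k - 1)
  have hk_succ := esymmS_eq_esymmSDel_add lam i (k + 1)
  rw [sub_sub, one_add_one_eq_two] at hk_pred
  rw [add_sub_cancel_right] at hk_succ
  linear_combination (-(lam i * esymmSDel n (k - 1) lam i + esymmS n k lam)) * hk +
    lam i * esymmSDel n k lam i * hk_pred + esymmS n (k - 1) lam * hk_succ

theorem sum_sq_mul_esymmSDel_sq_sub_eq (k : ℕ) :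
    ∑ i, lam i ^ 2 *
        (esymmSDel n (k - 1) lam i ^ 2 - esymmSDel n k lam i * esymmSDel n (k - 2) lam i) =
      k * esymmS n k lam ^ 2 - (k + 1) * esymmS n (k - 1) lam * esymmS n (k + 1) lam := by
  simp only [sq_mul_esymmSDel_sq_sub_eq, sum_sub_distrib, ← mul_sum, sum_const, card_univ,
    Fintype.card_fin, nsmul_eq_mul]
  have hsucc := sum_esymmSDel lam (k + 1)
  push_cast at hsucc
  rw [sum_esymmSDel, hsucc]
  ring

end Deletion

theorem sum_dQk_lambda_sq_ge_general (n k : ℕ) (hk1 : 1 ≤ k) (hkn : k ≤ n)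
    (lam : Fin n → ℝ) (hpos : ∀ i, 0 < lam i) :
    (k : ℝ) / ((n : ℝ) - (k : ℝ) + 1) * (esymmS n (k : ℤ) lam) ^ 2 ≤
      ∑ i, (lam i) ^ 2 *
        ((esymmSDel n ((k : ℤ) - 1) lam i) ^ 2 -
          esymmSDel n (k : ℤ) lam i * esymmSDel n ((k : ℤ) - 2) lam i) := by
  obtain ⟨j, rfl⟩ : ∃ j, k = j + 1 := ⟨k - 1, by omega⟩
  have newton := (univ.val.map lam).esymm_add_two_mul_le_sq (by simpa using fun i => hpos i) j
  rw [Multiset.card_map, card_val, card_univ, Fintype.card_fin] at newton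
  have hd : (0 : ℝ) < n - (j + 1 : ℕ) + 1 := by
    have : ((j + 1 : ℕ) : ℝ) ≤ n := mod_cast hkn
    linarith
  rw [sum_sq_mul_esymmSDel_sq_sub_eq, div_mul_eq_mul_div, div_le_iff₀ hd,
    show ((j + 1 : ℕ) : ℤ) - 1 = j by push_cast; ring,
    show ((j + 1 : ℕ) : ℤ) + 1 = ((j + 2 : ℕ) : ℤ) by push_cast; ring,
    esymmS_natCast, esymmS_natCast, esymmS_natCast]
  push_cast
  linear_combination newton

/-- Inequality (3.5): `∑_i λ_i² (S_{k-1,i}² − S_{k,i} S_{k-2,i}) ≥ (k/(n−k+1)) S_k²`,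
i.e. `∑_i (∂Q_k/∂λ_i) λ_i² ≥ (k/(n−k+1)) Q_k²` after dividing by `S_{k-1}²`. -/
theorem sum_dQk_lambda_sq_ge (n k : ℕ) (hn : 1 ≤ n) (hk1 : 1 ≤ k) (hkn : k ≤ n)
    (lam : Fin n → ℝ) (hpos : ∀ i, 0 < lam i) :
    (k : ℝ) / ((n : ℝ) - (k : ℝ) + 1) * (esymmS n (k : ℤ) lam) ^ 2 ≤
      ∑ i, (lam i) ^ 2 *
        ((esymmSDel n ((k : ℤ) - 1) lam i) ^ 2 -
          esymmSDel n (k : ℤ) lam i * esymmSDel n ((k : ℤ) - 2) lam i) :=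
  sum_dQk_lambda_sq_ge_general n k hk1 hkn lam hpos
end

section
/- Let n ≥ 1, m > 0, a ∈ ℝ, and c, d ∈ ℝ^n with d_i ≥ m for all 1 ≤ i ≤ n, and suppose a ≥ m + (2/m)·∑_{i=1}^n c_i². Then every eigenvalue of the symmetric arrowhead matrix B(a, c, d) is strictly greater than m/2; equivalently, B(a, c, d) − (m/2)·I is positive definite. -/
/-!
Completing the square, `μ y² + 2 b y ≥ -b²/μ`, bounds the quadratic form of `B(a, c, d)` at `x`
below by `(a - (∑ c i²)/μ) x₀²` when every `d i ≥ μ > 0`, while for `x₀ = 0` the form is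
`∑ d i x_{i+1}²`. So the matrix is positive definite once `a > (∑ c i²)/μ`. For `λ ≤ m/2`,
`B(a, c, d) - λI = B(a - λ, c, d - λ)` satisfies this with `μ = m/2`, hence is nonsingular.
-/

/-- The symmetric arrowhead matrix `B(a, c, d)`: `B_{00} = a`,
`B_{0i} = B_{i0} = c_i`, `B_{ii} = d_i`, and `B_{ij} = 0` for distinct `i, j ≥ 1`. -/
noncomputable def arrowhead (n : ℕ) (a : ℝ) (c d : Fin n → ℝ) :
    Matrix (Fin (n + 1)) (Fin (n + 1)) ℝ :=
  Matrix.of fun i j =>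
    Fin.cases (motive := fun _ => ℝ)
      (Fin.cases (motive := fun _ => ℝ) a (fun j' => c j') j)
      (fun i' => Fin.cases (motive := fun _ => ℝ) (c i')
        (fun j' => if i' = j' then d i' else 0) j) i

open Matrix

lemma neg_sq_div_le_two_mul_add_mul_sq {μ δ : ℝ} (hμ : 0 < μ) (hδ : μ ≤ δ) (b y : ℝ) :
    -(b ^ 2 / μ) ≤ 2 * b * y + δ * y ^ 2 := by
  have hsq : 0 ≤ (μ * y + b) ^ 2 / μ := by positivity
  have hδy : μ * y ^ 2 ≤ δ * y ^ 2 := by gcongr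
  have hexpand : (μ * y + b) ^ 2 / μ = μ * y ^ 2 + 2 * b * y + b ^ 2 / μ := by
    field_simp
    ring
  linarith

section

variable {n : ℕ} (a : ℝ) (c d : Fin n → ℝ)

theorem isHermitian_arrowhead : (arrowhead n a c d).IsHermitian := by
  ext i j
  cases i using Fin.cases <;> cases j using Fin.cases <;>
    simp only [arrowhead, conjTranspose_apply, star_trivial, of_apply, Fin.cases_zero,
      Fin.cases_succ]
  split_ifs <;> simp_all

theorem arrowhead_sub_smul_one (lam : ℝ) :
    arrowhead n a c d - lam • (1 : Matrix (Fin (n + 1)) (Fin (n + 1)) ℝ)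
      = arrowhead n (a - lam) c (d - fun _ => lam) := by
  ext i j
  cases i using Fin.cases <;> cases j using Fin.cases <;>
    simp only [arrowhead, Matrix.sub_apply, Matrix.smul_apply, one_apply, of_apply,
      Fin.cases_zero, Fin.cases_succ, Pi.sub_apply]
  all_goals split_ifs <;> simp_all [Fin.succ_ne_zero, (Fin.succ_ne_zero _).symm]

theorem dotProduct_arrowhead_mulVec (x : Fin (n + 1) → ℝ) :
    x ⬝ᵥ arrowhead n a c d *ᵥ x
      = a * x 0 ^ 2 + ∑ i, (2 * (c i * x 0) * x i.succ + d i * x i.succ ^ 2) := by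
  simp only [dotProduct, mulVec, arrowhead, of_apply, Fin.sum_univ_succ, Fin.cases_zero,
    Fin.cases_succ, ite_mul, zero_mul, Finset.sum_ite_eq, Finset.mem_univ, ↓reduceIte]
  rw [mul_add, Finset.mul_sum, add_assoc, ← Finset.sum_add_distrib]
  congr 1
  · ring
  · exact Finset.sum_congr rfl fun i _ => by ring

theorem posDef_arrowhead {μ : ℝ} (hμ : 0 < μ) (hd : ∀ i, μ ≤ d i)
    (ha : (∑ i, c i ^ 2) / μ < a) : (arrowhead n a c d).PosDef := by
  refine posDef_iff_dotProduct_mulVec.mpr ⟨isHermitian_arrowhead a c d, fun x hx => ?_⟩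
  rw [star_trivial, dotProduct_arrowhead_mulVec]
  by_cases hx0 : x 0 = 0
  · obtain ⟨j, hj⟩ : ∃ j : Fin n, x j.succ ≠ 0 := by
      by_contra! h
      exact hx (funext fun k => Fin.cases hx0 h k)
    simp only [hx0, mul_zero, zero_mul, zero_add, ne_eq, OfNat.ofNat_ne_zero,
      not_false_eq_true, zero_pow]
    refine Finset.sum_pos' (fun i _ => ?_) ⟨j, Finset.mem_univ j, ?_⟩
    · exact mul_nonneg (hμ.trans_le (hd i)).le (sq_nonneg _)
    · exact mul_pos (hμ.trans_le (hd j)) (by positivity)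
  · have hcompleted := Finset.sum_le_sum fun i (_ : i ∈ Finset.univ) =>
      neg_sq_div_le_two_mul_add_mul_sq hμ (hd i) (c i * x 0) (x i.succ)
    have hlower : ∑ i, -((c i * x 0) ^ 2 / μ) = -((∑ i, c i ^ 2) / μ * x 0 ^ 2) := by
      simp only [Finset.sum_neg_distrib, mul_pow, Finset.sum_div, Finset.sum_mul,
        div_mul_eq_mul_div]
    have hx0sq : 0 < x 0 ^ 2 := by positivity
    nlinarith [mul_lt_mul_of_pos_right ha hx0sq]

end

theorem arrowhead_eigenvalues_lower_bound_general (n : ℕ) (m a : ℝ) (hm : 0 < m)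
    (c d : Fin n → ℝ) (hd : ∀ i, m ≤ d i)
    (ha : m + (2 / m) * ∑ i, (c i) ^ 2 ≤ a) :
    (∀ lam : ℝ,
        ((arrowhead n a c d) - lam • (1 : Matrix (Fin (n + 1)) (Fin (n + 1)) ℝ)).det = 0 →
        m / 2 < lam) ∧
      ((arrowhead n a c d) - (m / 2) • (1 : Matrix (Fin (n + 1)) (Fin (n + 1)) ℝ)).PosDef := by
  have hshift : ∀ lam ≤ m / 2,
      ((arrowhead n a c d) - lam • (1 : Matrix (Fin (n + 1)) (Fin (n + 1)) ℝ)).PosDef := by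
    intro lam hlam
    rw [arrowhead_sub_smul_one]
    have hsum : (∑ i, c i ^ 2) / (m / 2) = 2 / m * ∑ i, c i ^ 2 := by ring
    refine posDef_arrowhead _ _ _ (half_pos hm) (fun i => ?_) (by linarith)
    simp only [Pi.sub_apply]
    linarith [hd i]
  refine ⟨fun lam hdet => ?_, hshift _ le_rfl⟩
  by_contra! hlam
  exact (hshift lam hlam).det_pos.ne' hdet

/-- Quantitative lower eigenvalue bound (Claim 5.2): if `d_i ≥ m` and
`a ≥ m + (2/m) ∑ c_i²`, then every eigenvalue of `B(a,c,d)` exceeds `m/2`;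
equivalently `B(a,c,d) − (m/2)I` is positive definite. -/
theorem arrowhead_eigenvalues_lower_bound (n : ℕ) (hn : 1 ≤ n) (m a : ℝ) (hm : 0 < m)
    (c d : Fin n → ℝ) (hd : ∀ i, m ≤ d i)
    (ha : m + (2 / m) * ∑ i, (c i) ^ 2 ≤ a) :
    (∀ lam : ℝ,
        ((arrowhead n a c d) - lam • (1 : Matrix (Fin (n + 1)) (Fin (n + 1)) ℝ)).det = 0 →
        m / 2 < lam) ∧
      ((arrowhead n a c d) - (m / 2) • (1 : Matrix (Fin (n + 1)) (Fin (n + 1)) ℝ)).PosDef :=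
  arrowhead_eigenvalues_lower_bound_general n m a hm c d hd ha
end

section
/- Let n ≥ 1 and let 1 ≤ k ≤ n be an integer. The function Q_k(λ) = S_k^n(λ)/S_{k-1}^n(λ) is concave on the open positive orthant {λ ∈ ℝ^n : λ_i > 0 for all i}. -/
open Finset

lemma concaveOn_of_superadditive_of_homogeneous {E : Type*} [AddCommMonoid E] [Module ℝ E]
    {s : Set E} {f : E → ℝ} (hs : Convex ℝ s) (hs_smul : ∀ x ∈ s, ∀ a : ℝ, 0 < a → a • x ∈ s)
    (hf_add : ∀ x ∈ s, ∀ y ∈ s, f x + f y ≤ f (x + y))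
    (hf_smul : ∀ x ∈ s, ∀ a : ℝ, 0 < a → f (a • x) = a * f x) :
    ConcaveOn ℝ s f := by
  refine ⟨hs, fun x hx y hy a b ha hb hab => ?_⟩
  rcases ha.eq_or_lt with rfl | ha
  · obtain rfl : b = 1 := by simpa using hab
    simp
  rcases hb.eq_or_lt with rfl | hb
  · obtain rfl : a = 1 := by simpa using hab
    simp
  calc a • f x + b • f y = f (a • x) + f (b • y) := by
        rw [hf_smul x hx a ha, hf_smul y hy b hb, smul_eq_mul, smul_eq_mul]
    _ ≤ f (a • x + b • y) := hf_add _ (hs_smul x hx a ha) _ (hs_smul y hy b hb)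

noncomputable def parallelSum (a b : ℝ) : ℝ := a * b / (a + b)

lemma parallelSum_le_parallelSum {a b b' : ℝ} (ha : 0 < a) (hb : 0 < b) (hbb' : b ≤ b') :
    parallelSum a b ≤ parallelSum a b' := by
  have hb' : 0 < b' := hb.trans_le hbb'
  rw [parallelSum, parallelSum, div_le_div_iff₀ (by positivity) (by positivity)]
  nlinarith [mul_pos ha ha]

lemma parallelSum_add_le {a b c d : ℝ} (ha : 0 < a) (hb : 0 < b) (hc : 0 < c) (hd : 0 < d) :
    parallelSum a b + parallelSum c d ≤ parallelSum (a + c) (b + d) := by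
  rw [parallelSum, parallelSum, parallelSum, div_add_div _ _ (by positivity) (by positivity),
    div_le_div_iff₀ (by positivity) (by positivity)]
  nlinarith [sq_nonneg (a * d - b * c), mul_pos ha hb, mul_pos hc hd, mul_pos ha hd, mul_pos hb hc]

lemma parallelSum_div {a B : ℝ} (A : ℝ) (hB : B ≠ 0) :
    parallelSum a (A / B) = a * A / (a * B + A) := by
  rw [parallelSum, ← div_div_div_cancel_right₀ hB (a * A), add_div, mul_div_cancel_right₀ _ hB,
    mul_div_assoc']

section Esymm

variable {ι : Type*}

noncomputable def esymmOn (s : Finset ι) (k : ℕ) (x : ι → ℝ) : ℝ :=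
  ∑ t ∈ s.powersetCard k, ∏ i ∈ t, x i

variable {s : Finset ι} {k : ℕ} {x : ι → ℝ}

lemma esymmOn_zero (s : Finset ι) (x : ι → ℝ) : esymmOn s 0 x = 1 := by
  simp [esymmOn]

lemma esymmOn_one (s : Finset ι) (x : ι → ℝ) : esymmOn s 1 x = ∑ i ∈ s, x i := by
  simp [esymmOn, powersetCard_one]

lemma esymmOn_pos (hk : k ≤ #s) (hx : ∀ i ∈ s, 0 < x i) : 0 < esymmOn s k x :=
  sum_pos (fun _ ht => prod_pos fun i hi => hx i ((mem_powersetCard.1 ht).1 hi))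
    (powersetCard_nonempty.2 hk)

lemma esymmOn_smul (s : Finset ι) (k : ℕ) (a : ℝ) (x : ι → ℝ) :
    esymmOn s k (a • x) = a ^ k * esymmOn s k x := by
  rw [esymmOn, esymmOn, mul_sum]
  refine sum_congr rfl fun t ht => ?_
  rw [← (mem_powersetCard.1 ht).2]
  simp [prod_mul_distrib]

variable [DecidableEq ι]

lemma mul_esymmOn_erase {i : ι} (hi : i ∈ s) (k : ℕ) (x : ι → ℝ) :
    x i * esymmOn (s.erase i) k x = ∑ u ∈ s.powersetCard (k + 1) with i ∈ u, ∏ j ∈ u, x j := by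
  rw [esymmOn, mul_sum]
  refine sum_nbij' (insert i) (fun u => u.erase i) ?_ ?_ ?_ ?_ ?_ <;>
    simp only [mem_filter, mem_powersetCard, subset_erase]
  · rintro t ⟨⟨hts, hit⟩, rfl⟩
    exact ⟨⟨insert_subset hi hts, card_insert_of_notMem hit⟩, mem_insert_self i t⟩
  · rintro u ⟨⟨hus, hu⟩, hiu⟩
    exact ⟨⟨(erase_subset i u).trans hus, notMem_erase i u⟩, by simp [card_erase_of_mem hiu, hu]⟩
  · rintro t ⟨⟨-, hit⟩, -⟩
    exact erase_insert hit
  · rintro u ⟨-, hiu⟩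
    exact insert_erase hiu
  · rintro t ⟨⟨-, hit⟩, -⟩
    rw [prod_insert hit]

lemma esymmOn_succ_of_mem {i : ι} (hi : i ∈ s) (k : ℕ) (x : ι → ℝ) :
    esymmOn s (k + 1) x = x i * esymmOn (s.erase i) k x + esymmOn (s.erase i) (k + 1) x := by
  have h_not_mem : {u ∈ s.powersetCard (k + 1) | i ∉ u} = (s.erase i).powersetCard (k + 1) := by
    ext u
    simp only [mem_filter, mem_powersetCard, subset_erase]
    tauto
  rw [mul_esymmOn_erase hi, esymmOn, esymmOn, ← h_not_mem, sum_filter_add_sum_filter_not]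

lemma succ_mul_esymmOn_succ (s : Finset ι) (k : ℕ) (x : ι → ℝ) :
    (k + 1) * esymmOn s (k + 1) x = ∑ i ∈ s, x i * esymmOn (s.erase i) k x := by
  rw [sum_congr rfl fun i hi => mul_esymmOn_erase hi k x,
    sum_comm' (t' := s.powersetCard (k + 1)) (s' := id) (f := fun _ u => ∏ j ∈ u, x j),
    esymmOn, mul_sum]
  · refine sum_congr rfl fun u hu => ?_
    simp [(mem_powersetCard.1 hu).2]
  · intro i u
    simp only [mem_filter, mem_powersetCard, id]
    exact ⟨fun ⟨_, hu, hiu⟩ => ⟨hiu, hu⟩, fun ⟨hiu, hu⟩ => ⟨hu.1 hiu, hu, hiu⟩⟩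

end Esymm

section EsymmQuot

variable {ι : Type*} {s : Finset ι} {k : ℕ} {x y : ι → ℝ}

-- `esymmQuot s k` is the paper's `Q_{k+1}` in the variables indexed by `s`.
noncomputable def esymmQuot (s : Finset ι) (k : ℕ) (x : ι → ℝ) : ℝ :=
  esymmOn s (k + 1) x / esymmOn s k x

lemma esymmQuot_zero (s : Finset ι) (x : ι → ℝ) : esymmQuot s 0 x = ∑ i ∈ s, x i := by
  rw [esymmQuot, esymmOn_one, esymmOn_zero, div_one]

lemma esymmQuot_pos (hk : k + 1 ≤ #s) (hx : ∀ i ∈ s, 0 < x i) : 0 < esymmQuot s k x :=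
  div_pos (esymmOn_pos hk hx) (esymmOn_pos (by omega) hx)

lemma esymmQuot_smul (s : Finset ι) (k : ℕ) {a : ℝ} (ha : a ≠ 0) (x : ι → ℝ) :
    esymmQuot s k (a • x) = a * esymmQuot s k x := by
  rw [esymmQuot, esymmQuot, esymmOn_smul, esymmOn_smul, pow_succ', mul_assoc,
    mul_div_assoc, mul_div_mul_left _ _ (pow_ne_zero k ha)]

variable [DecidableEq ι]

lemma esymmQuot_succ_eq_sum (hk : k + 2 ≤ #s) (hx : ∀ i ∈ s, 0 < x i) :
    esymmQuot s (k + 1) x =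
      (k + 2 : ℝ)⁻¹ * ∑ i ∈ s, parallelSum (x i) (esymmQuot (s.erase i) k x) := by
  have h_term : ∀ i ∈ s, parallelSum (x i) (esymmQuot (s.erase i) k x)
      = x i * esymmOn (s.erase i) (k + 1) x / esymmOn s (k + 1) x := by
    intro i hi
    have h_erase : #(s.erase i) = #s - 1 := card_erase_of_mem hi
    have h_pos : 0 < esymmOn (s.erase i) k x :=
      esymmOn_pos (by omega) fun j hj => hx j (mem_of_mem_erase hj)
    rw [esymmQuot, parallelSum_div _ h_pos.ne', esymmOn_succ_of_mem hi]
  have h_den : esymmOn s (k + 1) x ≠ 0 := (esymmOn_pos (by omega) hx).ne'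
  rw [sum_congr rfl h_term, ← sum_div, ← succ_mul_esymmOn_succ s (k + 1) x, esymmQuot]
  push_cast
  field_simp
  ring

lemma esymmQuot_add_le (hk : k + 1 ≤ #s) (hx : ∀ i ∈ s, 0 < x i) (hy : ∀ i ∈ s, 0 < y i) :
    esymmQuot s k x + esymmQuot s k y ≤ esymmQuot s k (x + y) := by
  induction k generalizing s with
  | zero => simp [esymmQuot_zero, sum_add_distrib]
  | succ k ih =>
    have hxy : ∀ i ∈ s, 0 < (x + y) i := fun i hi => add_pos (hx i hi) (hy i hi)
    rw [esymmQuot_succ_eq_sum hk hx, esymmQuot_succ_eq_sum hk hy, esymmQuot_succ_eq_sum hk hxy,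
      ← mul_add, ← sum_add_distrib]
    gcongr with i hi
    have h_erase : #(s.erase i) = #s - 1 := card_erase_of_mem hi
    have hk' : k + 1 ≤ #(s.erase i) := by omega
    have hx' : ∀ j ∈ s.erase i, 0 < x j := fun j hj => hx j (mem_of_mem_erase hj)
    have hy' : ∀ j ∈ s.erase i, 0 < y j := fun j hj => hy j (mem_of_mem_erase hj)
    calc parallelSum (x i) (esymmQuot (s.erase i) k x)
          + parallelSum (y i) (esymmQuot (s.erase i) k y)
        ≤ parallelSum (x i + y i) (esymmQuot (s.erase i) k x + esymmQuot (s.erase i) k y) :=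
          parallelSum_add_le (hx i hi) (esymmQuot_pos hk' hx') (hy i hi) (esymmQuot_pos hk' hy')
      _ ≤ parallelSum ((x + y) i) (esymmQuot (s.erase i) k (x + y)) :=
          parallelSum_le_parallelSum (hxy i hi)
            (add_pos (esymmQuot_pos hk' hx') (esymmQuot_pos hk' hy')) (ih hk' hx' hy')

lemma concaveOn_esymmQuot [Fintype ι] (hk : k + 1 ≤ Fintype.card ι) :
    ConcaveOn ℝ {x : ι → ℝ | ∀ i, 0 < x i} (esymmQuot univ k) := by
  have h_convex : Convex ℝ {x : ι → ℝ | ∀ i, 0 < x i} := by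
    simpa [Set.pi] using convex_pi (s := Set.univ) fun (_ : ι) _ => convex_Ioi (0 : ℝ)
  refine concaveOn_of_superadditive_of_homogeneous h_convex
    (fun x hx a ha i => mul_pos ha (hx i))
    (fun x hx y hy => esymmQuot_add_le hk (fun i _ => hx i) (fun i _ => hy i))
    (fun x _ a ha => esymmQuot_smul univ k ha.ne' x)

end EsymmQuot

theorem Qk_concaveOn_positive_orthant_general (n k : ℕ) (hk1 : 1 ≤ k) (hkn : k ≤ n) :
    ConcaveOn ℝ {lam : Fin n → ℝ | ∀ i, 0 < lam i}
      (fun lam => esymmS n (k : ℤ) lam / esymmS n ((k : ℤ) - 1) lam) := by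
  obtain ⟨m, rfl⟩ : ∃ m, k = m + 1 := ⟨k - 1, by omega⟩
  have h_eq : (fun lam => esymmS n ((m + 1 : ℕ) : ℤ) lam / esymmS n ((m + 1 : ℕ) - 1 : ℤ) lam)
      = esymmQuot univ m := by
    funext lam
    rw [esymmS, esymmS, if_neg (by omega), if_neg (by omega)]
    simp [esymmQuot, esymmOn]
  rw [h_eq]
  exact concaveOn_esymmQuot (by simpa using hkn)

/-- Marcus–Lopes: the quotient `Q_k = S_k^n / S_{k-1}^n` is concave on the
open positive orthant. -/
theorem Qk_concaveOn_positive_orthant (n k : ℕ) (hn : 1 ≤ n) (hk1 : 1 ≤ k) (hkn : k ≤ n) :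
    ConcaveOn ℝ {lam : Fin n → ℝ | ∀ i, 0 < lam i}
      (fun lam => esymmS n (k : ℤ) lam / esymmS n ((k : ℤ) - 1) lam) :=
  Qk_concaveOn_positive_orthant_general n k hk1 hkn
end
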